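/- For all ultrafilters U and V on ℕ, both U and V are finitely embeddable in U ⊕ V, where an ultrafilter U is finitely embeddable in W if for every W-large set B there is a U-large set A with A ≤_fe B. -/
import Mathlib


/-- `A ≤_fe B`: every finite subset of `A` has a translate contained in `B`. -/
def fe (A B : Set ℕ) : Prop :=
  ∀ F : Finset ℕ, ↑F ⊆ A → ∃ n : ℕ, ∀ a ∈ F, n + a ∈ B

/-- The sum of ultrafilters on ℕ: `A ∈ usum U V ↔ {n | {m | n + m ∈ A} ∈ V} ∈ U`. -/
def usum (U V : Ultrafilter ℕ) : Ultrafilter ℕ :=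
  U.bind fun n => V.map fun m => n + m

/-- Finite embeddability of ultrafilters: `U ⊴_fe V` iff every `B ∈ V`
contains a finitely embedded `A ∈ U`. -/
def ufe (U V : Ultrafilter ℕ) : Prop := ∀ B ∈ V, ∃ A ∈ U, fe A B

lemma mem_usum {U V : Ultrafilter ℕ} {B : Set ℕ} :
    B ∈ usum U V ↔ {n | {m | n + m ∈ B} ∈ V} ∈ U := by
  simp [usum, Ultrafilter.bind, Ultrafilter.mem_map, Set.preimage, Set.mem_setOf_eq]
  rfl

/-- Both `U` and `V` are finitely embeddable in `U ⊕ V`. -/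
theorem stmt6 (U V : Ultrafilter ℕ) : ufe U (usum U V) ∧ ufe V (usum U V) := by
  constructor
  · intro B hB
    rw [mem_usum] at hB
    refine ⟨_, hB, ?_⟩
    intro F hF
    have h : (⋂ a ∈ F, {m | a + m ∈ B}) ∈ V := by
      exact (Filter.biInter_finset_mem F).mpr fun a ha => hF ha
    obtain ⟨m, hm⟩ := Ultrafilter.nonempty_of_mem h
    simp only [Set.mem_iInter, Set.mem_setOf_eq] at hm
    exact ⟨m, fun a ha => by rw [Nat.add_comm]; exact hm a ha⟩
  · intro B hB
    rw [mem_usum] at hB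
    obtain ⟨n₀, hn₀⟩ := Ultrafilter.nonempty_of_mem hB
    refine ⟨{m | n₀ + m ∈ B}, hn₀, fun F hF => ⟨n₀, fun a ha => hF ha⟩⟩
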